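/- Let 0 < α ≤ 1, let z be a real number with z > 1, regarded as a complex number, and let ω = exp(2πi/3) ∈ ℂ. Then ∑_{n=0}^{∞} Γ(3n+3+α)/(Γ(α)·Γ(3n+4))·z^{−n} = (z/3)·((1−z^{−1/3})^{−α} + (1−ω·z^{−1/3})^{−α} + (1−ω²·z^{−1/3})^{−α}) − z, where z^{−1/3} is the real power of z and the complex powers (·)^{−α} are principal-branch complex powers; in particular the right-hand side is real. -/

import Mathlib

/-!
The coefficients are generalized binomial coefficients, `Γ(m + α) / (Γ(α) m!) = (α + m - 1 choose m)`,
i.e. the Taylor coefficients of `(1 - x)^(-α)` on `|x| < 1`.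
With `x = z^(-1/3)`, averaging this series over `x, ωx, ω²x` keeps exactly the terms whose index
is a multiple of `3` (series multisection), and the `n`-th of these is `φ̃_α(3n)·z^(-n)`.
Dropping the term `n = 0`, which is `1`, shifting the index and multiplying by `z` gives the
identity.
-/

open Complex Finset Nat

theorem Complex.Gamma_add_nat_div_mul_factorial {a : ℂ} (ha : ∀ k : ℕ, a ≠ -k) (n : ℕ) :
    Gamma (a + n) / (Gamma a * n !) = Ring.choose (a + n - 1) n := by
  rw [Ring.choose_eq_smul, Polynomial.descPochhammer_smeval_eq_ascPochhammer,
    show a + n - 1 - n + 1 = a by ring, Polynomial.ascPochhammer_smeval_eq_eval,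
    ← Gamma_add_nat_div_Gamma_eq a ha, smul_eq_mul]
  ring

theorem Complex.hasSum_choose_mul_pow (a : ℂ) {x : ℂ} (hx : ‖x‖ < 1) :
    HasSum (fun n : ℕ => Ring.choose (a + n - 1) n * x ^ n) ((1 - x) ^ (-a)) := by
  have := (one_div_one_sub_cpow_hasFPowerSeriesOnBall_zero a).hasSum
    (y := x) (by rwa [Metric.mem_eball, edist_zero_right, ← ofReal_norm, ENNReal.ofReal_lt_one])
  simpa [FormalMultilinearSeries.ofScalars_apply_eq, cpow_neg, mul_comm] using this

theorem IsPrimitiveRoot.sum_pow_pow_eq_ite {R : Type*} [CommRing R] [IsDomain R] {ζ : R} {k : ℕ}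
    (hζ : IsPrimitiveRoot ζ k) (n : ℕ) :
    ∑ j ∈ range k, (ζ ^ j) ^ n = if k ∣ n then (k : R) else 0 := by
  simp_rw [← pow_mul, mul_comm _ n, pow_mul]
  split_ifs with h
  · simp [(hζ.pow_eq_one_iff_dvd n).mpr h]
  · have hne : ζ ^ n - 1 ≠ 0 := sub_ne_zero.mpr fun h1 => h ((hζ.pow_eq_one_iff_dvd n).mp h1)
    have := mul_geom_sum (ζ ^ n) k
    rw [pow_right_comm, hζ.pow_eq_one, one_pow, sub_self] at this
    exact (mul_eq_zero.mp this).resolve_left hne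

theorem IsPrimitiveRoot.hasSum_multisection {R : Type*} [CommRing R] [IsDomain R]
    [TopologicalSpace R] [IsTopologicalRing R] {ζ : R} {k : ℕ} (hζ : IsPrimitiveRoot ζ k)
    (hk : k ≠ 0) {c : ℕ → R} {x : R} {s : ℕ → R}
    (hs : ∀ j ∈ range k, HasSum (fun n => c n * (ζ ^ j * x) ^ n) (s j)) :
    HasSum (fun n => k * (c (k * n) * x ^ (k * n))) (∑ j ∈ range k, s j) := by
  have hsum : HasSum (fun n => if k ∣ n then k * (c n * x ^ n) else 0) (∑ j ∈ range k, s j) := by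
    refine (hasSum_sum hs).congr_fun fun n => ?_
    rw [← ite_zero_mul, ← hζ.sum_pow_pow_eq_ite, sum_mul]
    refine sum_congr rfl fun j _ => ?_
    ring
  rw [← (mul_right_injective₀ hk).hasSum_iff] at hsum
  · simpa [Function.comp_def] using hsum
  · intro n hn
    rw [if_neg fun ⟨m, hm⟩ => hn ⟨m, hm.symm⟩]

theorem Complex.ofReal_Gamma_div_eq_choose {α : ℝ} (hα : 0 < α) (m : ℕ) :
    ((Real.Gamma (m + α) / (Real.Gamma α * Real.Gamma (m + 1)) : ℝ) : ℂ)
      = Ring.choose ((α : ℂ) + m - 1) m := by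
  rw [← Gamma_add_nat_div_mul_factorial, Real.Gamma_nat_eq_factorial]
  · push_cast [← Gamma_ofReal]
    ring_nf
  · intro k hk
    have hre := congrArg re hk
    rw [ofReal_re, neg_re, natCast_re] at hre
    linarith [(k.cast_nonneg : (0 : ℝ) ≤ k)]

theorem Real.mul_rpow_neg_one_third_pow (n : ℕ) {z : ℝ} (hz : 0 < z) :
    z * (z ^ (-(1 / 3 : ℝ))) ^ (3 * (n + 1)) = z ^ (-(n : ℝ)) := by
  rw [← Real.rpow_natCast, ← Real.rpow_mul hz.le, show -(n : ℝ) = 1 + -(1 / 3) * ↑(3 * (n + 1)) by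
    push_cast; ring, Real.rpow_add hz, Real.rpow_one]

theorem ztransform_phi_mod3_3_general (α : ℝ) (hα : 0 < α) (z : ℝ) (hz : 1 < z)
    (ω : ℂ) (hω : ω = Complex.exp (2 * (Real.pi : ℂ) * Complex.I / 3)) :
    HasSum (fun n : ℕ =>
        ((Real.Gamma (3 * (n : ℝ) + 3 + α) /
            (Real.Gamma α * Real.Gamma (3 * (n : ℝ) + 4)) * z ^ (-(n : ℝ)) : ℝ) : ℂ))
      (((z : ℂ) / 3) *
        ((1 - ((z ^ (-(1 / 3 : ℝ)) : ℝ) : ℂ)) ^ ((-α : ℝ) : ℂ)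
          + (1 - ω * ((z ^ (-(1 / 3 : ℝ)) : ℝ) : ℂ)) ^ ((-α : ℝ) : ℂ)
          + (1 - ω ^ 2 * ((z ^ (-(1 / 3 : ℝ)) : ℝ) : ℂ)) ^ ((-α : ℝ) : ℂ)) - (z : ℂ)) := by
  have hz₀ : 0 < z := one_pos.trans hz
  have hx : ‖((z ^ (-(1 / 3 : ℝ)) : ℝ) : ℂ)‖ < 1 := by
    rw [norm_real, Real.norm_of_nonneg (by positivity)]
    exact Real.rpow_lt_one_of_one_lt_of_neg hz (by norm_num)
  have hω₃ : IsPrimitiveRoot ω 3 := hω ▸ by exact_mod_cast isPrimitiveRoot_exp 3 (by norm_num)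
  have hsection := hω₃.hasSum_multisection three_ne_zero
    (c := fun n => Ring.choose ((α : ℂ) + n - 1) n)
    (s := fun j => (1 - ω ^ j * ((z ^ (-(1 / 3 : ℝ)) : ℝ) : ℂ)) ^ (-(α : ℂ))) fun j _ =>
      hasSum_choose_mul_pow _ <| by
        rwa [norm_mul, norm_pow, hω₃.norm'_eq_one three_ne_zero, one_pow, one_mul]
  have htail := ((hasSum_nat_add_iff' 1).mpr hsection).mul_left ((z : ℂ) / 3)
  refine (congrArg (HasSum _) ?_).mp (htail.congr_fun fun n => ?_)
  · simp only [sum_range_succ, mul_zero, pow_zero, pow_one, one_mul, Ring.choose_zero_right]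
    push_cast
    ring
  · rw [← ofReal_Gamma_div_eq_choose hα, ← Real.mul_rpow_neg_one_third_pow n hz₀]
    push_cast
    ring_nf

/-- Z-transform of the subsequence `n ↦ φ̃_α(3n+3)` for `0 < α ≤ 1`, `z > 1`,
with `ω = exp(2πi/3)`:
`∑ₙ Γ(3n+3+α)/(Γ(α)·Γ(3n+4))·z^(-n)
  = (z/3)·((1-z^(-1/3))^(-α) + (1-ω·z^(-1/3))^(-α) + (1-ω²·z^(-1/3))^(-α)) - z`,
the sum of real terms being taken in `ℂ`, so in particular the RHS is real. -/
theorem ztransform_phi_mod3_3 (α : ℝ) (hα : 0 < α) (hα' : α ≤ 1) (z : ℝ) (hz : 1 < z)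
    (ω : ℂ) (hω : ω = Complex.exp (2 * (Real.pi : ℂ) * Complex.I / 3)) :
    HasSum (fun n : ℕ =>
        ((Real.Gamma (3 * (n : ℝ) + 3 + α) /
            (Real.Gamma α * Real.Gamma (3 * (n : ℝ) + 4)) * z ^ (-(n : ℝ)) : ℝ) : ℂ))
      (((z : ℂ) / 3) *
        ((1 - ((z ^ (-(1 / 3 : ℝ)) : ℝ) : ℂ)) ^ ((-α : ℝ) : ℂ)
          + (1 - ω * ((z ^ (-(1 / 3 : ℝ)) : ℝ) : ℂ)) ^ ((-α : ℝ) : ℂ)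
          + (1 - ω ^ 2 * ((z ^ (-(1 / 3 : ℝ)) : ℝ) : ℂ)) ^ ((-α : ℝ) : ℂ)) - (z : ℂ)) :=
  ztransform_phi_mod3_3_general α hα z hz ω hω
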